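/- arXiv:2508.17251 — 2 statements merged into one kernel-verified Lean document; each statement's English description precedes it below -/
import Mathlib

section
/- Suppose λ(Ã) ∩ λ(S) = ∅ and S ∈ ℝ^(ν×ν) is invertible. Let Π̃ ∈ ℝ^(2n×ν) be the unique solution of ÃΠ̃ − Π̃S = −B̃L for the structured realisation (Ã, B̃, C̃) of formula (58)-type (second block a chain fed by input, with C̃ equal to the n-th row structure). Then for every j = 1,…,n, the j-th row Π̃_j of Π̃ satisfies C̃Π̃ = Π̃_j S^(n−j+1). In particular, C̃Π̃ = Π̃_n S. -/
/-- The set of complex eigenvalues of a real square matrix. -/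
noncomputable def cSpectrum {m : Type*} [Fintype m] [DecidableEq m]
    (A : Matrix m m ℝ) : Set ℂ :=
  spectrum ℂ (A.map Complex.ofReal)

/-- State matrix of the non-minimal left-difference-operator realisation:
top-left block has ones on the superdiagonal and last row `-a`; top-right
block has last row `b` and zeros elsewhere; bottom-right block is the upper
shift. -/
def Atilde (n : ℕ) (a b : Fin n → ℝ) :
    Matrix (Fin n ⊕ Fin n) (Fin n ⊕ Fin n) ℝ :=
  Matrix.fromBlocks
    (Matrix.of fun i j =>
      if (i : ℕ) = n - 1 then -a j
      else if (i : ℕ) + 1 = (j : ℕ) then 1 else 0)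
    (Matrix.of fun i j => if (i : ℕ) = n - 1 then b j else 0)
    0
    (Matrix.of fun i j => if (i : ℕ) + 1 = (j : ℕ) then 1 else 0)

/-- Input matrix `e_{2n}` of the realisation. -/
def Btilde (n : ℕ) : Matrix (Fin n ⊕ Fin n) (Fin 1) ℝ :=
  Matrix.of fun i _ =>
    match i with
    | Sum.inl _ => 0
    | Sum.inr j => if (j : ℕ) = n - 1 then 1 else 0

/-- Output matrix `(-a₁,…,-a_n, b₁,…,b_n)` of the realisation. -/
def Ctilde (n : ℕ) (a b : Fin n → ℝ) : Matrix (Fin 1) (Fin n ⊕ Fin n) ℝ :=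
  Matrix.of fun _ j =>
    match j with
    | Sum.inl j => -a j
    | Sum.inr j => b j

/-!
Since `B̃` vanishes on the first block, the first block rows of the Sylvester equation read
`(ÃΠ̃)_i = Π̃_i S`. The shift structure of `Ã` gives `(ÃΠ̃)_i = Π̃_{i+1}` for `i < n - 1`, and its
companion row gives `(ÃΠ̃)_{n-1} = C̃Π̃`. Hence `Π̃_{i+1} = Π̃_i S` and `C̃Π̃ = Π̃_{n-1} S`, and chaining
these gives `C̃Π̃ = Π̃_j S^(n-j)` for every row `j`.
-/

open Matrix

theorem Matrix.vecMul_pow_eq_last_of_succ {k : ℕ} {ι R : Type*} [Fintype ι] [DecidableEq ι]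
    [Semiring R] (r : Fin (k + 1) → ι → R) (S : Matrix ι ι R)
    (hr : ∀ i : Fin k, r i.succ = r i.castSucc ᵥ* S) (j : Fin (k + 1)) :
    r j ᵥ* S ^ (k - j) = r (Fin.last k) := by
  induction j using Fin.reverseInduction with
  | last => simp
  | cast i ih =>
    have hk : k - (i : ℕ) = (k - (i + 1)) + 1 := by omega
    rw [Fin.val_castSucc, hk, pow_succ', ← vecMul_vecMul, ← hr, ← ih, Fin.val_succ]

theorem Matrix.mul_apply_eq_vecMul_of_sylvester {m p q R : Type*} [Fintype m] [Fintype p]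
    [Fintype q] [Ring R] {A : Matrix m m R} {P : Matrix m p R} {S : Matrix p p R}
    {B : Matrix m q R} {L : Matrix q p R} (hP : A * P - P * S = -(B * L)) {i : m} (hB : B i = 0) :
    (A * P) i = P i ᵥ* S := by
  ext c
  have hrow := congrFun₂ hP i c
  rwa [sub_apply, neg_apply, mul_apply_eq_vecMul B, hB, zero_vecMul, Pi.zero_apply, neg_zero,
    sub_eq_zero] at hrow

theorem Btilde_apply_inl (n : ℕ) (i : Fin n) : Btilde n (Sum.inl i) = 0 :=
  rfl

section Atilde
variable {k : ℕ} {κ : Type*} (a b : Fin (k + 1) → ℝ) (P : Matrix (Fin (k + 1) ⊕ Fin (k + 1)) κ ℝ)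

theorem Atilde_mul_apply_inl_castSucc (i : Fin k) :
    (Atilde (k + 1) a b * P) (Sum.inl i.castSucc) = P (Sum.inl i.succ) := by
  have hi : (i : ℕ) ≠ k := i.isLt.ne
  ext c
  simp only [Atilde, mul_apply, Fintype.sum_sum_type, fromBlocks_apply₁₁, fromBlocks_apply₁₂,
    of_apply, Fin.val_castSucc, add_tsub_cancel_right, hi, if_false, ite_mul, one_mul, zero_mul,
    Finset.sum_const_zero, add_zero]
  simp_rw [← Fin.val_succ, Fin.val_inj, Finset.sum_ite_eq, Finset.mem_univ, if_true]

theorem Atilde_mul_apply_inl_last :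
    (Atilde (k + 1) a b * P) (Sum.inl (Fin.last k)) = (Ctilde (k + 1) a b * P) 0 := by
  ext c
  simp [Atilde, Ctilde, mul_apply, Fintype.sum_sum_type]

end Atilde

theorem pitilde_row_structure_general
    (n ν : ℕ) (a b : Fin n → ℝ)
    (S : Matrix (Fin ν) (Fin ν) ℝ) (L : Matrix (Fin 1) (Fin ν) ℝ)
    (Pt : Matrix (Fin n ⊕ Fin n) (Fin ν) ℝ)
    (hPt : Atilde n a b * Pt - Pt * S = -(Btilde n * L)) :
    ∀ j : Fin n,
      Ctilde n a b * Pt =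
        (Matrix.of fun (_ : Fin 1) k => Pt (Sum.inl j) k) * S ^ (n - (j : ℕ)) := by
  intro j
  obtain ⟨k, rfl⟩ := Nat.exists_eq_add_one_of_ne_zero j.pos.ne'
  have hrow (i : Fin (k + 1)) : (Atilde (k + 1) a b * Pt) (Sum.inl i) = Pt (Sum.inl i) ᵥ* S :=
    mul_apply_eq_vecMul_of_sylvester hPt (Btilde_apply_inl _ i)
  have hshift (i : Fin k) : Pt (Sum.inl i.succ) = Pt (Sum.inl i.castSucc) ᵥ* S := by
    rw [← Atilde_mul_apply_inl_castSucc a b Pt, hrow]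
  have hout : (Ctilde (k + 1) a b * Pt) 0 = Pt (Sum.inl (Fin.last k)) ᵥ* S := by
    rw [← Atilde_mul_apply_inl_last a b, hrow]
  have hexp : k + 1 - (j : ℕ) = (k - j) + 1 := by omega
  calc Ctilde (k + 1) a b * Pt = replicateRow (Fin 1) ((Ctilde (k + 1) a b * Pt) 0) := by
        ext i c
        rw [Subsingleton.elim i 0, replicateRow_apply]
    _ = replicateRow (Fin 1) (Pt (Sum.inl j) ᵥ* S ^ (k + 1 - (j : ℕ))) := by
        rw [hout, ← vecMul_pow_eq_last_of_succ (fun i => Pt (Sum.inl i)) S hshift j,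
          vecMul_vecMul, ← pow_succ, hexp]
    _ = _ := replicateRow_vecMul _ _

theorem pitilde_row_structure
    (n ν : ℕ) (hn : 0 < n) (a b : Fin n → ℝ)
    (S : Matrix (Fin ν) (Fin ν) ℝ) (L : Matrix (Fin 1) (Fin ν) ℝ)
    (hS : IsUnit S)
    (hspec : cSpectrum (Atilde n a b) ∩ cSpectrum S = ∅)
    (Pt : Matrix (Fin n ⊕ Fin n) (Fin ν) ℝ)
    (hPt : Atilde n a b * Pt - Pt * S = -(Btilde n * L)) :
    ∀ j : Fin n,
      Ctilde n a b * Pt =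
        (Matrix.of fun (_ : Fin 1) k => Pt (Sum.inl j) k) * S ^ (n - (j : ℕ)) :=
  pitilde_row_structure_general n ν a b S L Pt hPt
end

section
/- Two state-space realisations with the same transfer function have the same moments: if C(z_iI−A)⁻¹B = C̃(z_iI−Ã)⁻¹B̃ for all z_i ∉ λ(A) ∪ λ(Ã), and Π, Π̃ solve AΠ − ΠS = −BL and ÃΠ̃ − Π̃S = −B̃L respectively with λ(S) disjoint from λ(A) ∪ λ(Ã), then CΠ = C̃Π̃. -/
open Polynomial

namespace Matrix

variable {R K : Type*} [CommRing R] [Field K]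
variable {n n' m p q : Type*} [Fintype n] [DecidableEq n] [Fintype n'] [DecidableEq n']
  [Fintype m] [DecidableEq m]

theorem natDegree_adjugate_charmatrix_le (M : Matrix n n R) (i j : n) :
    ((charmatrix M).adjugate i j).natDegree ≤ Fintype.card n - 1 := by
  obtain ⟨k, hk⟩ : ∃ k, Fintype.card n = k + 1 :=
    Nat.exists_eq_succ_of_ne_zero (Fintype.card_pos_iff.2 ⟨i⟩).ne'
  let e := Fintype.equivFinOfCardEq hk
  have hreindex : (charmatrix M).adjugate i j =
      (charmatrix (reindex e e M)).adjugate (e i) (e j) := by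
    rw [charmatrix_reindex, adjugate_reindex]
    simp
  have hminor : (charmatrix (reindex e e M)).submatrix (e j).succAbove (e i).succAbove =
      (X : R[X]) • ((1 : Matrix (Fin (k + 1)) (Fin (k + 1)) R).submatrix
          (e j).succAbove (e i).succAbove).map C +
        (-(reindex e e M).submatrix (e j).succAbove (e i).succAbove).map C := by
    ext a b
    by_cases h : (e j).succAbove a = (e i).succAbove b <;>
      simp [one_apply, h, sub_eq_add_neg]
  rw [hreindex, adjugate_fin_succ_eq_det_submatrix, hminor, hk, Nat.add_sub_cancel]
  calc _ ≤ ((-1 : R[X]) ^ ((e j : ℕ) + (e i : ℕ))).natDegree + _ := natDegree_mul_le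
    _ ≤ 0 + Fintype.card (Fin k) := by
        gcongr
        · exact natDegree_pow_le.trans (by simp)
        · exact natDegree_det_X_add_C_le _ _
    _ = k := by simp

theorem eq_zero_of_smul_map_C_eq_mul_charmatrix {S : Matrix m m K} {D : Matrix p m K} {c : K[X]}
    {Q : Matrix p m K[X]} (hc : IsCoprime S.charpoly c) (h : c • D.map C = Q * charmatrix S) :
    D = 0 := by
  have hadj : c • (D.map C * (charmatrix S).adjugate) = S.charpoly • Q := by
    rw [← smul_mul, h, Matrix.mul_assoc, mul_adjugate, Matrix.mul_smul, Matrix.mul_one]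
    rfl
  have hzero : D.map C * (charmatrix S).adjugate = 0 := by
    refine Matrix.ext fun i j => ?_
    refine eq_zero_of_dvd_of_natDegree_lt
      (hc.dvd_of_dvd_mul_left ⟨Q i j, by simpa using congrFun₂ hadj i j⟩) ?_
    rw [charpoly_natDegree_eq_dim]
    refine (natDegree_sum_le_of_forall_le _ _ fun k _ => ?_).trans_lt
      (Nat.sub_lt (Fintype.card_pos_iff.2 ⟨j⟩) one_pos)
    simpa using natDegree_C_mul_le _ _ |>.trans (natDegree_adjugate_charmatrix_le S k j)
  have hcharpoly : S.charpoly • D.map C = 0 := by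
    rw [← Matrix.mul_one (D.map C), ← Matrix.mul_smul, charpoly, ← adjugate_mul, ← Matrix.mul_assoc,
      hzero, Matrix.zero_mul]
  refine Matrix.ext fun i j => ?_
  simpa [S.charpoly_monic.ne_zero] using congrFun₂ hcharpoly i j

theorem isCoprime_charpoly_of_disjoint_spectrum [IsAlgClosed K] {A : Matrix n n K}
    {A' : Matrix n' n' K} (h : Disjoint (spectrum K A) (spectrum K A')) :
    IsCoprime A.charpoly A'.charpoly := by
  refine (isCoprime_iff_aeval_ne_zero_of_isAlgClosed K K _ _).2 fun z => ?_
  simp only [aeval_def, Algebra.algebraMap_self, eval₂_id, ← not_and_or, ← IsRoot.def,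
    ← mem_spectrum_iff_isRoot_charpoly]
  exact fun hz => h.ne_of_mem hz.1 hz.2 rfl

theorem charmatrix_mul_map_C_sub_map_C_mul_charmatrix (A : Matrix n n R) (S : Matrix m m R)
    (M : Matrix n m R) :
    charmatrix A * M.map C - M.map C * charmatrix S = (M * S - A * M).map C := by
  simp only [charmatrix, Matrix.mul_sub, Matrix.sub_mul, RingHom.mapMatrix_apply, scalar_apply,
    ← smul_one_eq_diagonal, Matrix.smul_mul, Matrix.mul_smul, Matrix.one_mul, Matrix.mul_one]
  rw [Matrix.map_sub _ (map_sub C), Matrix.map_mul, Matrix.map_mul]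
  abel

/-- The transfer function `C (X - A)⁻¹ B` multiplied by `charpoly A`. -/
noncomputable def transferNumerator (A : Matrix n n R) (B : Matrix n q R) (C : Matrix p n R) :
    Matrix p q R[X] :=
  C.map Polynomial.C * (charmatrix A).adjugate * B.map Polynomial.C

theorem charpoly_smul_sub_transferNumerator_mul_charmatrix [Fintype q] {A : Matrix n n R}
    {B : Matrix n q R} {S : Matrix m m R} {L : Matrix q m R} {P : Matrix n m R}
    (C : Matrix p n R) (h : A * P - P * S = -(B * L)) :
    A.charpoly • (C * P).map Polynomial.C - transferNumerator A P C * charmatrix S =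
      transferNumerator A B C * L.map Polynomial.C := by
  have hsylvester : P * S - A * P = B * L := by rw [← neg_sub, h, neg_neg]
  have := congrArg (C.map Polynomial.C * (charmatrix A).adjugate * ·)
    (charmatrix_mul_map_C_sub_map_C_mul_charmatrix A S P)
  simp only [hsylvester, Matrix.mul_sub, ← Matrix.mul_assoc] at this
  rw [Matrix.mul_assoc _ (adjugate _), adjugate_mul, Matrix.mul_smul, Matrix.mul_one] at this
  simpa [transferNumerator, charpoly, Matrix.mul_assoc, Matrix.map_mul] using this

theorem charmatrix_map_eval (A : Matrix n n R) (z : R) :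
    (charmatrix A).map (eval z) = z • (1 : Matrix n n R) - A := by
  ext i j
  by_cases h : i = j <;> simp [h]

theorem transferNumerator_map_eval {A : Matrix n n R} (B : Matrix n q R) (C : Matrix p n R)
    {z : R} (hz : z ∉ spectrum R A) :
    (transferNumerator A B C).map (eval z) =
      A.charpoly.eval z • (C * (z • (1 : Matrix n n R) - A)⁻¹ * B) := by
  have hdet : (z • (1 : Matrix n n R) - A).det = A.charpoly.eval z := by
    rw [eval_charpoly, scalar_apply, smul_one_eq_diagonal]
  have hunit : IsUnit (z • (1 : Matrix n n R) - A).det := by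
    rw [← isUnit_iff_isUnit_det]
    simpa [spectrum.notMem_iff, Algebra.algebraMap_eq_smul_one] using hz
  have hadj : (z • (1 : Matrix n n R) - A).adjugate =
      A.charpoly.eval z • (z • (1 : Matrix n n R) - A)⁻¹ := by
    rw [inv_def, smul_smul, ← hdet, Ring.mul_inverse_cancel _ hunit, one_smul]
  have hmap := RingHom.map_adjugate (evalRingHom z) (charmatrix A)
  simp only [RingHom.mapMatrix_apply, coe_evalRingHom, charmatrix_map_eval] at hmap
  rw [transferNumerator, ← coe_evalRingHom, Matrix.map_mul, Matrix.map_mul, coe_evalRingHom, hmap,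
    hadj]
  simp [Matrix.map_map, Function.comp_def]

theorem charpoly_smul_transferNumerator_eq [Infinite K] {A : Matrix n n K} {B : Matrix n q K}
    {C : Matrix p n K} {A' : Matrix n' n' K} {B' : Matrix n' q K} {C' : Matrix p n' K}
    (h : ∀ z ∉ spectrum K A ∪ spectrum K A',
      C * (z • (1 : Matrix n n K) - A)⁻¹ * B = C' * (z • (1 : Matrix n' n' K) - A')⁻¹ * B') :
    A'.charpoly • transferNumerator A B C = A.charpoly • transferNumerator A' B' C' := by
  refine Matrix.ext fun i j => eq_of_infinite_eval_eq _ _ ?_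
  refine ((A.finite_spectrum.union A'.finite_spectrum).infinite_compl).mono fun z hz => ?_
  obtain ⟨hzA, hzA'⟩ := not_or.1 hz
  have hnum := congrFun₂ (transferNumerator_map_eval B C hzA) i j
  have hnum' := congrFun₂ (transferNumerator_map_eval B' C' hzA') i j
  simp only [map_apply, smul_apply, smul_eq_mul] at hnum hnum'
  simp only [Set.mem_ofPred_eq, smul_apply, smul_eq_mul, eval_mul, hnum, hnum', h z hz]
  ring

theorem mul_eq_mul_of_transferFunction_eq [IsAlgClosed K] [Fintype q] {A : Matrix n n K}
    {B : Matrix n q K} {C : Matrix p n K} {A' : Matrix n' n' K} {B' : Matrix n' q K}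
    {C' : Matrix p n' K} {S : Matrix m m K} {L : Matrix q m K} {P : Matrix n m K}
    {P' : Matrix n' m K}
    (htf : ∀ z ∉ spectrum K A ∪ spectrum K A',
      C * (z • (1 : Matrix n n K) - A)⁻¹ * B = C' * (z • (1 : Matrix n' n' K) - A')⁻¹ * B')
    (hdisj : Disjoint (spectrum K S) (spectrum K A ∪ spectrum K A'))
    (hP : A * P - P * S = -(B * L)) (hP' : A' * P' - P' * S = -(B' * L)) :
    C * P = C' * P' := by
  have hcop : IsCoprime S.charpoly (A.charpoly * A'.charpoly) :=
    (isCoprime_charpoly_of_disjoint_spectrum (hdisj.mono_right Set.subset_union_left)).mul_right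
      (isCoprime_charpoly_of_disjoint_spectrum (hdisj.mono_right Set.subset_union_right))
  have hmoment := charpoly_smul_sub_transferNumerator_mul_charmatrix C hP
  have hmoment' := charpoly_smul_sub_transferNumerator_mul_charmatrix C' hP'
  have htransfer := congrArg (· * L.map Polynomial.C) (charpoly_smul_transferNumerator_eq htf)
  simp only [Matrix.smul_mul] at htransfer
  rw [← sub_eq_zero]
  refine eq_zero_of_smul_map_C_eq_mul_charmatrix hcop
    (Q := A'.charpoly • transferNumerator A P C - A.charpoly • transferNumerator A' P' C') ?_
  rw [Matrix.map_sub _ (map_sub Polynomial.C), Matrix.sub_mul, Matrix.smul_mul, Matrix.smul_mul]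
  linear_combination (norm := module) A'.charpoly • hmoment - A.charpoly • hmoment' + htransfer

end Matrix

theorem moments_invariant_under_realisation
    (n nt ν : ℕ)
    (A : Matrix (Fin n) (Fin n) ℝ) (B : Matrix (Fin n) (Fin 1) ℝ)
    (C : Matrix (Fin 1) (Fin n) ℝ)
    (At : Matrix (Fin nt) (Fin nt) ℝ) (Bt : Matrix (Fin nt) (Fin 1) ℝ)
    (Ct : Matrix (Fin 1) (Fin nt) ℝ)
    (S : Matrix (Fin ν) (Fin ν) ℝ) (L : Matrix (Fin 1) (Fin ν) ℝ)
    (Pim : Matrix (Fin n) (Fin ν) ℝ) (Pimt : Matrix (Fin nt) (Fin ν) ℝ)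
    (htf : ∀ z : ℂ, z ∉ cSpectrum A ∪ cSpectrum At →
      C.map Complex.ofReal * (z • (1 : Matrix (Fin n) (Fin n) ℂ) -
          A.map Complex.ofReal)⁻¹ * B.map Complex.ofReal =
      Ct.map Complex.ofReal * (z • (1 : Matrix (Fin nt) (Fin nt) ℂ) -
          At.map Complex.ofReal)⁻¹ * Bt.map Complex.ofReal)
    (hdisj : cSpectrum S ∩ (cSpectrum A ∪ cSpectrum At) = ∅)
    (hPi : A * Pim - Pim * S = -(B * L))
    (hPit : At * Pimt - Pimt * S = -(Bt * L)) :
    C * Pim = Ct * Pimt := by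
  have hmap_mul {a b c : ℕ} (M : Matrix (Fin a) (Fin b) ℝ) (N : Matrix (Fin b) (Fin c) ℝ) :
      (M * N).map Complex.ofReal = M.map Complex.ofReal * N.map Complex.ofReal :=
    Matrix.map_mul (f := Complex.ofRealHom)
  have hsylvester {k : ℕ} {A : Matrix (Fin k) (Fin k) ℝ} {B : Matrix (Fin k) (Fin 1) ℝ}
      {P : Matrix (Fin k) (Fin ν) ℝ} (h : A * P - P * S = -(B * L)) :
      A.map Complex.ofReal * P.map Complex.ofReal - P.map Complex.ofReal * S.map Complex.ofReal =
        -(B.map Complex.ofReal * L.map Complex.ofReal) := by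
    simpa [hmap_mul, Matrix.map_sub, Matrix.map_neg] using congrArg (Matrix.map · Complex.ofReal) h
  apply Matrix.map_injective Complex.ofReal_injective
  simpa [hmap_mul] using Matrix.mul_eq_mul_of_transferFunction_eq htf
    (Set.disjoint_iff_inter_eq_empty.2 hdisj) (hsylvester hPi) (hsylvester hPit)
end
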